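/- Let q be a prime power and 1 ≤ m ≤ n ≤ q−1. If the monomial digraph D(q; m, n) is strong and q > (m−1)⁴, then diam(D(q; m, n)) ≤ 13. -/

import Mathlib

/-- `walkLen r k x y` means there is a directed walk of length exactly `k`
from `x` to `y` in the digraph with arc relation `r`. -/
def walkLen {V : Type*} (r : V → V → Prop) : ℕ → V → V → Prop
  | 0 => fun x y => x = y
  | k + 1 => fun x y => ∃ z, r x z ∧ walkLen r k z y

/-- The distance from `x` to `y`: the minimum length of a directed walk,
`⊤` if `y` is not reachable from `x`. -/
noncomputable def ddist {V : Type*} (r : V → V → Prop) (x y : V) : ℕ∞ :=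
  ⨅ n ∈ {n : ℕ | walkLen r n x y}, (n : ℕ∞)

/-- The diameter of the digraph: the maximum of distances over all ordered pairs. -/
noncomputable def ddiam {V : Type*} (r : V → V → Prop) : ℕ∞ :=
  ⨆ x, ⨆ y, ddist r x y

/-- A digraph is strong if every vertex is reachable from every vertex. -/
def IsStrongDigraph {V : Type*} (r : V → V → Prop) : Prop :=
  ∀ x y : V, ∃ n : ℕ, walkLen r n x y

/-- The arc relation of the monomial digraph `D(q; m, n)`:
`(x₁, x₂) → (y₁, y₂)` iff `x₂ + y₂ = x₁ ^ m * y₁ ^ n`. -/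
def monomialArc {F : Type*} [Field F] (m n : ℕ) (x y : F × F) : Prop :=
  x.2 + y.2 = x.1 ^ m * y.1 ^ n

/-!
Every element of a finite field `F` with `(m - 1) ^ 4 ≤ q = |F|` is a sum of three `m`-th powers.
With a primitive additive character `ψ` and `S a = ∑ x, ψ (a * x ^ m)`, a value `c` missed by
`x ^ m + y ^ m + z ^ m` forces `∑ a, ψ (-a c) S(a)³ = 0`, so `q³ = |S 0|³ ≤ ∑_{a ≠ 0} |S a|³`.
Expanding `S a` in Gauss sums of the `D + 1 ≤ m` characters of order dividing `m` gives
`|S a| ≤ D √q` for `a ≠ 0` and Parseval gives `∑_{a ≠ 0} |S a|² = D q (q - 1)`, hence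
`q³ ≤ D² q^{3/2} (q - 1) < q³` since `D⁴ ≤ q`.

In `D(q; m, n)` the walk `(0, -b) → (x, b) → (1, x ^ m - b)` adds an `m`-th power to the
second coordinate, and `(1, b) → (0, -b) → (c, b)` reaches any vertex with that second coordinate.
Starting with the arc `(a, b) → (0, -b)` and adding three `m`-th powers, any two vertices are
joined by a walk of length `1 + 4 + 4 + 2 + 2 = 13`.
-/

open Finset

theorem sum_eq_apply_zero_add_sum_units {G₀ M : Type*} [GroupWithZero G₀] [Fintype G₀]
    [DecidableEq G₀] [AddCommMonoid M] (f : G₀ → M) :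
    ∑ x, f x = f 0 + ∑ u : G₀ˣ, f u := by
  have hval : univ.map ⟨((↑) : G₀ˣ → G₀), Units.val_injective⟩ = {0}ᶜ := by
    ext x
    simp [eq_comm]
  rw [Fintype.sum_eq_add_sum_compl 0, ← hval, Finset.sum_map]
  rfl

theorem AddChar.map_sum_eq_prod {ι A M : Type*} [AddCommMonoid A] [CommMonoid M]
    (ψ : AddChar A M) (s : Finset ι) (f : ι → A) : ψ (∑ i ∈ s, f i) = ∏ i ∈ s, ψ (f i) := by
  classical
  induction s using Finset.induction_on with
  | empty => simp
  | insert i s hi ih => rw [sum_insert hi, prod_insert hi, map_add_eq_mul, ih]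

theorem exists_mulChar_pow_eq_one_apply_ne_one {F : Type*} [Field F] [Finite F] {m : ℕ}
    {u : Fˣ} (hu : ∀ x : Fˣ, x ^ m ≠ u) : ∃ χ : MulChar F ℂ, χ ^ m = 1 ∧ χ u ≠ 1 := by
  have : NeZero (Monoid.exponent Fˣ) := ⟨Monoid.exponent_ne_zero_of_finite⟩
  set H := (powMonoidHom m : Fˣ →* Fˣ).range
  have hu' : u ∉ (MulChar.subgroupOrderIsoSubgroupMulChar F ℂ).symm
      (OrderDual.toDual (MulChar.subgroupOrderIsoSubgroupMulChar F ℂ H).ofDual) := by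
    simpa [H] using hu
  simp only [MulChar.mem_subgroupOrderIsoSubgroupMulChar_symm_iff, not_forall] at hu'
  obtain ⟨χ, hχ, hχu⟩ := hu'
  refine ⟨χ, MulChar.ext fun x => ?_, hχu⟩
  rw [MulChar.mem_subgroupOrderIsoSubgroupMulChar_iff] at hχ
  simpa [MulChar.pow_apply_coe] using hχ _ ⟨x, rfl⟩

section CharacterSums

variable {F : Type*} [Field F] [Fintype F]

theorem norm_gaussSum_eq_sqrt_card {χ : MulChar F ℂ} (hχ : χ ≠ 1) {ψ : AddChar F ℂ}
    (hψ : ψ.IsPrimitive) : ‖gaussSum χ ψ‖ = √(Fintype.card F) := by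
  have h := gaussSum_mul_gaussSum_eq_card hχ hψ
  rw [← star_gaussSum_eq, RCLike.star_def, Complex.mul_conj'] at h
  rw [← Real.sqrt_sq (norm_nonneg _)]
  exact congrArg _ (by exact_mod_cast h)

variable (m : ℕ) in
noncomputable def monomialSum (ψ : AddChar F ℂ) (a : F) : ℂ := ∑ x, ψ (a * x ^ m)

variable [DecidableEq F]

theorem MulChar.norm_apply_units (χ : MulChar F ℂ) (a : Fˣ) : ‖χ a‖ = 1 := by
  rw [← MulChar.coe_equivToUnitHom]
  exact Complex.norm_eq_one_of_mem_rootsOfUnity (χ.apply_mem_rootsOfUnity a)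

theorem MulChar.sum_apply_mul_inv_apply (χ χ' : MulChar F ℂ) :
    ∑ a, χ a * χ'⁻¹ a = if χ = χ' then (Fintype.card Fˣ : ℂ) else 0 := by
  simp only [← MulChar.mul_apply]
  split_ifs with h
  · rw [h, mul_inv_cancel, MulChar.sum_one_eq_card_units]
  · exact MulChar.sum_eq_zero_of_ne_one (mul_inv_eq_one.not.mpr h)

theorem MulChar.sum_norm_sum_mul_apply_sq (T : Finset (MulChar F ℂ)) (c : MulChar F ℂ → ℂ) :
    ∑ a, ‖∑ χ ∈ T, c χ * χ a‖ ^ 2 = Fintype.card Fˣ * ∑ χ ∈ T, ‖c χ‖ ^ 2 := by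
  have hexpand : ∀ a, (‖∑ χ ∈ T, c χ * χ a‖ : ℂ) ^ 2
      = ∑ χ ∈ T, ∑ χ' ∈ T, c χ * star (c χ') * (χ a * χ'⁻¹ a) := by
    intro a
    rw [← Complex.mul_conj', map_sum, Finset.sum_mul_sum]
    refine Finset.sum_congr rfl fun χ _ => Finset.sum_congr rfl fun χ' _ => ?_
    rw [map_mul, ← RCLike.star_def, MulChar.star_apply']
    ring
  apply Complex.ofReal_injective
  push_cast
  simp_rw [hexpand]
  rw [Finset.sum_comm]
  simp_rw [Finset.sum_comm (s := univ) (t := T), ← Finset.mul_sum,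
    MulChar.sum_apply_mul_inv_apply]
  simp [Finset.mul_sum, ← Complex.mul_conj', mul_comm]

theorem sum_addChar_mul_monomialSum_pow_eq_zero {m : ℕ} {ψ : AddChar F ℂ} (hψ : ψ.IsPrimitive)
    {k : ℕ} {c : F} (hc : ∀ x : Fin k → F, ∑ i, x i ^ m ≠ c) :
    ∑ a, ψ (-(a * c)) * monomialSum m ψ a ^ k = 0 := by
  have hexpand : ∀ a, ψ (-(a * c)) * monomialSum m ψ a ^ k
      = ∑ x : Fin k → F, ψ (a * (∑ i, x i ^ m - c)) := fun a => by
    rw [monomialSum, Fintype.sum_pow, Finset.mul_sum]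
    refine Finset.sum_congr rfl fun x _ => ?_
    rw [← AddChar.map_sum_eq_prod, ← AddChar.map_add_eq_mul, mul_sub, Finset.mul_sum]
    congr 1
    ring
  simp only [hexpand]
  rw [Finset.sum_comm]
  refine Finset.sum_eq_zero fun x _ => ?_
  simpa [mul_comm, sub_eq_zero, hc x] using AddChar.sum_mulShift (∑ i, x i ^ m - c) hψ

end CharacterSums

section MulCharsOfOrderDvd

variable {F : Type*} [Field F] [Fintype (MulChar F ℂ)] [DecidableEq (MulChar F ℂ)]

variable (F) in
noncomputable def mulCharsOfOrderDvd (m : ℕ) : Finset (MulChar F ℂ) := {χ | χ ^ m = 1}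

variable {m : ℕ}

@[simp]
theorem mem_mulCharsOfOrderDvd {χ : MulChar F ℂ} : χ ∈ mulCharsOfOrderDvd F m ↔ χ ^ m = 1 := by
  simp [mulCharsOfOrderDvd]

variable [Fintype F] [DecidableEq F]

theorem card_mulCharsOfOrderDvd :
    #(mulCharsOfOrderDvd F m) = #{x : Fˣ | x ^ m = 1} := by
  obtain ⟨e⟩ := MulChar.mulEquiv_units F ℂ
  refine Finset.card_equiv e.toEquiv fun χ => ?_
  simp only [mem_mulCharsOfOrderDvd, mem_filter, mem_univ, true_and, MulEquiv.toEquiv_eq_coe,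
    EquivLike.coe_coe, ← map_pow, map_eq_one_iff _ e.injective]

theorem sum_mulCharsOfOrderDvd_apply (u : Fˣ) :
    ∑ χ ∈ mulCharsOfOrderDvd F m, χ u = #{x : Fˣ | x ^ m = u} := by
  by_cases hpow : ∃ v : Fˣ, v ^ m = u
  · obtain ⟨v, rfl⟩ := hpow
    have hone : ∀ χ ∈ mulCharsOfOrderDvd F m, χ ↑(v ^ m) = 1 := fun χ hχ => by
      rw [Units.val_pow_eq_pow_val, map_pow, ← MulChar.pow_apply_coe,
        mem_mulCharsOfOrderDvd.mp hχ, MulChar.one_apply_coe]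
    rw [Finset.sum_congr rfl hone, Finset.sum_const, nsmul_one, card_mulCharsOfOrderDvd]
    exact congrArg _
      (MonoidHom.card_fiber_eq_of_mem_range (powMonoidHom m) ⟨1, one_pow m⟩ ⟨v, rfl⟩)
  · push Not at hpow
    obtain ⟨χ₁, hχ₁, hχ₁u⟩ := exists_mulChar_pow_eq_one_apply_ne_one hpow
    have hshift : ∑ χ ∈ mulCharsOfOrderDvd F m, χ u
        = χ₁ u * ∑ χ ∈ mulCharsOfOrderDvd F m, χ u := by
      rw [Finset.mul_sum]
      refine (Finset.sum_equiv (Equiv.mulLeft χ₁) (fun χ => ?_) fun χ _ => ?_).symm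
      · simp [mul_pow, hχ₁]
      · simp
    have hempty : ({x : Fˣ | x ^ m = u} : Finset Fˣ) = ∅ := filter_false_of_mem fun x _ => hpow x
    rw [hempty, card_empty, Nat.cast_zero]
    by_contra hne
    exact hχ₁u ((mul_eq_right₀ hne).mp hshift.symm)

theorem sum_units_comp_pow_eq (f : F → ℂ) :
    ∑ x : Fˣ, f (x ^ m : Fˣ) = ∑ χ ∈ mulCharsOfOrderDvd F m, ∑ x, χ x * f x := by
  simp only [sum_eq_apply_zero_add_sum_units (fun x => _ * f x), MulChar.map_zero, zero_mul,
    zero_add]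
  rw [Finset.sum_comm]
  simp only [← Finset.sum_mul, sum_mulCharsOfOrderDvd_apply, ← nsmul_eq_mul, ← Finset.sum_const]
  rw [← Finset.sum_fiberwise univ (· ^ m)]
  exact Finset.sum_congr rfl fun u _ => Finset.sum_congr rfl fun x hx => by
    rw [(mem_filter.mp hx).2]

theorem monomialSum_eq_sum_gaussSum (hm : m ≠ 0) {ψ : AddChar F ℂ} (hψ : ψ.IsPrimitive)
    (a : Fˣ) :
    monomialSum m ψ a = ∑ χ ∈ (mulCharsOfOrderDvd F m).erase 1, gaussSum χ ψ * χ⁻¹ a := by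
  have hunits : ∑ x : Fˣ, ψ (a * (x : F) ^ m)
      = ∑ χ ∈ mulCharsOfOrderDvd F m, gaussSum χ (ψ.mulShift a) := by
    simp only [← Units.val_pow_eq_pow_val, sum_units_comp_pow_eq (fun x => ψ (a * x)), gaussSum,
      AddChar.mulShift_apply]
  rw [monomialSum, sum_eq_apply_zero_add_sum_units, hunits,
    ← Finset.add_sum_erase _ _ (mem_mulCharsOfOrderDvd.mpr (one_pow m)),
    gaussSum_one_left (hψ a.ne_zero), zero_pow hm, mul_zero, AddChar.map_zero_eq_one,
    add_neg_cancel_left]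
  exact Finset.sum_congr rfl fun χ _ => by rw [gaussSum_mulShift_eq, mul_comm]

theorem norm_monomialSum_le (hm : m ≠ 0) {ψ : AddChar F ℂ} (hψ : ψ.IsPrimitive) (a : Fˣ) :
    ‖monomialSum m ψ a‖ ≤ #((mulCharsOfOrderDvd F m).erase 1) * √(Fintype.card F) := by
  rw [monomialSum_eq_sum_gaussSum hm hψ a, ← nsmul_eq_mul, ← Finset.sum_const]
  refine (norm_sum_le _ _).trans_eq (Finset.sum_congr rfl fun χ hχ => ?_)
  rw [norm_mul, norm_gaussSum_eq_sqrt_card (ne_of_mem_erase hχ) hψ, MulChar.norm_apply_units,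
    mul_one]

theorem sum_norm_monomialSum_sq (hm : m ≠ 0) {ψ : AddChar F ℂ} (hψ : ψ.IsPrimitive) :
    ∑ a : Fˣ, ‖monomialSum m ψ a‖ ^ 2
      = Fintype.card Fˣ * (#((mulCharsOfOrderDvd F m).erase 1) * Fintype.card F) := by
  set T := (mulCharsOfOrderDvd F m).erase 1
  -- conjugation turns `χ⁻¹ a` into `χ a`, so that orthogonality of characters applies
  have hconj : ∀ a : Fˣ, ‖monomialSum m ψ a‖ = ‖∑ χ ∈ T, star (gaussSum χ ψ) * χ a‖ := by
    intro a
    rw [monomialSum_eq_sum_gaussSum hm hψ a, ← norm_star, star_sum]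
    simp only [star_mul, MulChar.star_apply', inv_inv, mul_comm, T]
  have hzero : ‖∑ χ ∈ T, star (gaussSum χ ψ) * χ 0‖ ^ 2 = 0 := by simp [MulChar.map_zero]
  simp only [hconj]
  rw [← zero_add (∑ a : Fˣ, _), ← hzero,
    ← sum_eq_apply_zero_add_sum_units (fun a => ‖∑ χ ∈ T, star (gaussSum χ ψ) * χ a‖ ^ 2),
    MulChar.sum_norm_sum_mul_apply_sq, ← nsmul_eq_mul (#T), ← Finset.sum_const]
  congr 1
  refine Finset.sum_congr rfl fun χ hχ => ?_
  rw [norm_star, norm_gaussSum_eq_sqrt_card (ne_of_mem_erase hχ) hψ, Real.sq_sqrt (by positivity)]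

end MulCharsOfOrderDvd

theorem mul_sqrt_mul_lt_cube {D Q : ℝ} (hQ : 1 ≤ Q) (hD : D ^ 4 ≤ Q) :
    D * √Q * ((Q - 1) * (D * Q)) < Q ^ 3 := by
  have hsq : D ^ 2 ≤ √Q := Real.le_sqrt_of_sq_le (by linarith)
  have h1 : D ^ 2 * √Q ≤ Q :=
    calc D ^ 2 * √Q ≤ √Q * √Q := by gcongr
      _ = Q := Real.mul_self_sqrt (by linarith)
  calc D * √Q * ((Q - 1) * (D * Q)) = D ^ 2 * √Q * (Q * (Q - 1)) := by ring
    _ ≤ Q * (Q * (Q - 1)) := by gcongr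
    _ < Q ^ 3 := by nlinarith

theorem FiniteField.exists_pow_add_pow_add_pow_eq {F : Type*} [Field F] [Fintype F] {m : ℕ}
    (hm : m ≠ 0) (hq : (m - 1) ^ 4 ≤ Fintype.card F) (c : F) :
    ∃ x y z : F, x ^ m + y ^ m + z ^ m = c := by
  classical
  let : Fintype (MulChar F ℂ) := Fintype.ofFinite _
  by_contra! hc
  set ψ := AddChar.FiniteField.primitiveChar_to_Complex F
  have hψ : ψ.IsPrimitive := AddChar.FiniteField.primitiveChar_to_Complex_isPrimitive F
  have hD : ((#((mulCharsOfOrderDvd F m).erase 1) : ℕ) : ℝ) ^ 4 ≤ Fintype.card F := by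
    have : #((mulCharsOfOrderDvd F m).erase 1) ≤ m - 1 := by
      rw [card_erase_of_mem (mem_mulCharsOfOrderDvd.mpr (one_pow m)), card_mulCharsOfOrderDvd]
      exact Nat.sub_le_sub_right (IsCyclic.card_pow_eq_one_le (Nat.pos_of_ne_zero hm)) 1
    exact_mod_cast (Nat.pow_le_pow_left this 4).trans hq
  have hvanish := sum_addChar_mul_monomialSum_pow_eq_zero hψ (k := 3) (c := c) fun x => by
    simpa [Fin.sum_univ_three] using hc (x 0) (x 1) (x 2)
  have hS0 : monomialSum m ψ 0 = Fintype.card F := by simp [monomialSum]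
  rw [sum_eq_apply_zero_add_sum_units, hS0, zero_mul, neg_zero, AddChar.map_zero_eq_one,
    one_mul, ← eq_neg_iff_add_eq_zero] at hvanish
  set S := monomialSum m ψ
  set D := #((mulCharsOfOrderDvd F m).erase 1)
  set q := Fintype.card F
  have hcube : (q : ℝ) ^ 3 ≤ ∑ a : Fˣ, ‖S a‖ ^ 3 := by
    calc (q : ℝ) ^ 3 = ‖-∑ a : Fˣ, ψ (-(a * c)) * S a ^ 3‖ := by
          rw [← hvanish, norm_pow, Complex.norm_natCast]
      _ ≤ ∑ a : Fˣ, ‖ψ (-(a * c)) * S a ^ 3‖ := by rw [norm_neg]; exact norm_sum_le _ _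
      _ = ∑ a : Fˣ, ‖S a‖ ^ 3 := by simp only [norm_mul, AddChar.norm_apply, one_mul, norm_pow]
  have hsq : ∑ a : Fˣ, ‖S a‖ ^ 3 ≤ D * √q * ∑ a : Fˣ, ‖S a‖ ^ 2 := by
    rw [Finset.mul_sum]
    exact Finset.sum_le_sum fun a _ => by
      rw [pow_succ' _ 2]
      exact mul_le_mul_of_nonneg_right (norm_monomialSum_le hm hψ a) (by positivity)
  rw [sum_norm_monomialSum_sq hm hψ, Fintype.card_units, Nat.cast_sub Fintype.card_pos,
    Nat.cast_one] at hsq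
  exact (mul_sqrt_mul_lt_cube (by exact_mod_cast Fintype.card_pos) hD).not_ge (hcube.trans hsq)

theorem walkLen_add {V : Type*} {r : V → V → Prop} {k l : ℕ} {x y z : V}
    (hxy : walkLen r k x y) (hyz : walkLen r l y z) : walkLen r (k + l) x z := by
  induction k generalizing x with
  | zero => rw [zero_add]; exact (show x = y from hxy) ▸ hyz
  | succ k ih =>
    obtain ⟨w, hxw, hwy⟩ := hxy
    rw [Nat.succ_add]
    exact ⟨w, hxw, ih hwy⟩

theorem ddiam_le_of_forall_walkLen {V : Type*} {r : V → V → Prop} {k : ℕ}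
    (h : ∀ x y, walkLen r k x y) : ddiam r ≤ k :=
  iSup₂_le fun x y => iInf₂_le k (h x y)

section MonomialDigraph

variable {F : Type*} [Field F] {m n : ℕ}

theorem monomialArc_zero_right (hn : n ≠ 0) (a b : F) : monomialArc m n (a, b) (0, -b) := by
  simp [monomialArc, zero_pow hn]

theorem monomialArc_zero_left (hm : m ≠ 0) (b c : F) : monomialArc m n (0, -b) (c, b) := by
  simp [monomialArc, zero_pow hm]

theorem monomialArc_one_right (b x : F) : monomialArc m n (x, b) (1, x ^ m - b) := by
  simp [monomialArc]

theorem walkLen_monomialArc_zero_one (hm : m ≠ 0) (b x : F) :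
    walkLen (monomialArc m n) 2 (0, -b) (1, x ^ m - b) :=
  ⟨_, monomialArc_zero_left hm b x, _, monomialArc_one_right b x, rfl⟩

theorem walkLen_monomialArc_one (hm : m ≠ 0) (hn : n ≠ 0) (b c : F) :
    walkLen (monomialArc m n) 2 (1, b) (c, b) :=
  ⟨_, monomialArc_zero_right hn 1 b, _, monomialArc_zero_left hm b c, rfl⟩

theorem walkLen_monomialArc_zero_zero (hm : m ≠ 0) (hn : n ≠ 0) (b x : F) :
    walkLen (monomialArc m n) 4 (0, -b) (0, -(b - x ^ m)) := by
  rw [neg_sub]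
  exact walkLen_add (walkLen_monomialArc_zero_one hm b x) (walkLen_monomialArc_one hm hn _ 0)

theorem walkLen_monomialArc_thirteen (hm : m ≠ 0) (hn : n ≠ 0)
    (hsum : ∀ c : F, ∃ x y z : F, x ^ m + y ^ m + z ^ m = c) (u v : F × F) :
    walkLen (monomialArc m n) 13 u v := by
  obtain ⟨a, b⟩ := u
  obtain ⟨c, d⟩ := v
  obtain ⟨x, y, z, hxyz⟩ := hsum (d + b)
  have hd : z ^ m - (b - x ^ m - y ^ m) = d := by linear_combination hxyz
  have hstart : walkLen (monomialArc m n) 1 (a, b) (0, -b) :=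
    ⟨_, monomialArc_zero_right hn a b, rfl⟩
  have hend : walkLen (monomialArc m n) 2 (1, z ^ m - (b - x ^ m - y ^ m)) (c, d) := by
    rw [← hd]
    exact walkLen_monomialArc_one hm hn _ c
  exact walkLen_add (walkLen_add (walkLen_add (walkLen_add hstart
    (walkLen_monomialArc_zero_zero hm hn b x)) (walkLen_monomialArc_zero_zero hm hn _ y))
    (walkLen_monomialArc_zero_one hm _ z)) hend

end MonomialDigraph

theorem diam_le_13_general {p e m n : ℕ}
    (F : Type*) [Field F] [Fintype F] (hF : Fintype.card F = p ^ e)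
    (hm : 1 ≤ m) (hmn : m ≤ n)
    (hq : (m - 1) ^ 4 < p ^ e) :
    ddiam (monomialArc (F := F) m n) ≤ 13 := by
  have hm0 : m ≠ 0 := Nat.one_le_iff_ne_zero.mp hm
  have hn0 : n ≠ 0 := Nat.one_le_iff_ne_zero.mp (hm.trans hmn)
  have hsum := FiniteField.exists_pow_add_pow_add_pow_eq (F := F) hm0 (hF ▸ hq.le)
  exact ddiam_le_of_forall_walkLen (walkLen_monomialArc_thirteen hm0 hn0 hsum)

theorem diam_le_13 {p e m n : ℕ} (hp : p.Prime) (he : 0 < e)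
    (F : Type*) [Field F] [Fintype F] (hF : Fintype.card F = p ^ e)
    (hm : 1 ≤ m) (hmn : m ≤ n) (hn : n ≤ p ^ e - 1)
    (hstrong : IsStrongDigraph (monomialArc (F := F) m n))
    (hq : (m - 1) ^ 4 < p ^ e) :
    ddiam (monomialArc (F := F) m n) ≤ 13 :=
  diam_le_13_general F hF hm hmn hq
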